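/- Fix k > 0, c > 0, δ > 0 and C₀ ≥ 0, and let b : ℝ → ℂ be measurable with |b(t)| ≤ C₀ e^{2ck(1+t²)} for all t ∈ ℝ. Then for every z ∈ ℂ with Re z ≥ 0, Im z ≥ 0 and |z| > 4c, the integral over {t : |t| ≥ δ} is absolutely convergent and |∫_{|t|≥δ} e^{−k t² z e^{−iπ/4}} b(t) dt| ≤ C₀ e^{2ck} · e^{−k(|z|/2 − 2c)δ²} / (k(|z|/2 − 2c)δ). -/

import Mathlib

/-!
Since `e^{-iπ/4}` rotates the closed first quadrant into the sector `|arg w| ≤ π/4`, the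
kernel satisfies `|e^{-k t² z e^{-iπ/4}}| ≤ e^{-k t² |z|/2}`. Together with the growth bound on
`b` the integrand is dominated by `C₀ e^{2ck} e^{-a t²}` with `a = k(|z|/2 - 2c) > 0`, and the
Gaussian tail is estimated by
`∫_{t ≥ δ} e^{-a t²} ≤ ∫_{t ≥ δ} (t/δ) e^{-a t²} = e^{-aδ²} / (2aδ)`.
-/

open MeasureTheory Set Real

noncomputable section

section GaussianTail

variable {a : ℝ}

lemma integral_Ioi_mul_exp_neg_mul_sq (ha : 0 < a) (δ : ℝ) :
    ∫ t in Ioi δ, t * exp (-a * t ^ 2) = exp (-a * δ ^ 2) / (2 * a) := by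
  have hderiv (x : ℝ) : HasDerivAt (fun x => -exp (-a * x ^ 2) / (2 * a))
      (x * exp (-a * x ^ 2)) x := by
    have h : HasDerivAt (fun x : ℝ => -a * x ^ 2) (-a * (2 * x)) x := by
      simpa using (hasDerivAt_pow 2 x).const_mul (-a)
    refine (h.exp.neg.div_const (2 * a)).congr_deriv ?_
    field_simp
  have hlim : Filter.Tendsto (fun x => -exp (-a * x ^ 2) / (2 * a)) Filter.atTop (nhds 0) := by
    have h : Filter.Tendsto (fun x : ℝ => -a * x ^ 2) Filter.atTop Filter.atBot :=
      (Filter.tendsto_pow_atTop two_ne_zero).const_mul_atTop_of_neg (neg_neg_of_pos ha)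
    simpa using ((tendsto_exp_atBot.comp h).neg).div_const (2 * a)
  rw [integral_Ioi_of_hasDerivAt_of_tendsto (hderiv δ).continuousAt.continuousWithinAt
    (fun x _ => hderiv x) (integrable_mul_exp_neg_mul_sq ha).integrableOn hlim]
  ring

lemma integral_Ici_exp_neg_mul_sq_le (ha : 0 < a) {δ : ℝ} (hδ : 0 < δ) :
    ∫ t in Ici δ, exp (-a * t ^ 2) ≤ exp (-a * δ ^ 2) / (2 * a * δ) :=
  calc ∫ t in Ici δ, exp (-a * t ^ 2)
      ≤ ∫ t in Ici δ, t * exp (-a * t ^ 2) / δ := by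
        refine setIntegral_mono_on (integrable_exp_neg_mul_sq ha).integrableOn
          ((integrable_mul_exp_neg_mul_sq ha).div_const δ).integrableOn measurableSet_Ici
          fun t ht => ?_
        rw [le_div_iff₀ hδ, mul_comm]
        exact mul_le_mul_of_nonneg_right ht (exp_pos _).le
    _ = exp (-a * δ ^ 2) / (2 * a * δ) := by
        rw [integral_div, integral_Ici_eq_integral_Ioi, integral_Ioi_mul_exp_neg_mul_sq ha,
          div_div]

lemma setOf_le_abs_eq_Iic_union_Ici (δ : ℝ) : {t : ℝ | δ ≤ |t|} = Iic (-δ) ∪ Ici δ := by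
  ext t
  simp only [mem_ofPred_eq, mem_union, mem_Iic, mem_Ici, le_abs, le_neg]
  tauto

lemma integral_abs_ge_exp_neg_mul_sq_le (ha : 0 < a) {δ : ℝ} (hδ : 0 < δ) :
    ∫ t in {t : ℝ | δ ≤ |t|}, exp (-a * t ^ 2) ≤ exp (-a * δ ^ 2) / (a * δ) := by
  have hint := (integrable_exp_neg_mul_sq ha).integrableOn (s := Iic (-δ))
  have hsymm : ∫ t in Iic (-δ), exp (-a * t ^ 2) = ∫ t in Ici δ, exp (-a * t ^ 2) := by
    have h := integral_comp_neg_Iic (-δ) (fun t => exp (-a * t ^ 2))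
    simp only [neg_sq, neg_neg] at h
    rwa [integral_Ici_eq_integral_Ioi]
  have hdisj : Disjoint (Iic (-δ)) (Ici δ) := Iic_disjoint_Ici.mpr (by linarith)
  rw [setOf_le_abs_eq_Iic_union_Ici, setIntegral_union hdisj measurableSet_Ici hint
    (integrable_exp_neg_mul_sq ha).integrableOn, hsymm]
  calc _ ≤ 2 * (exp (-a * δ ^ 2) / (2 * a * δ)) := by
        linarith [integral_Ici_exp_neg_mul_sq_le ha hδ]
    _ = exp (-a * δ ^ 2) / (a * δ) := by field_simp

variable {E : Type*} [NormedAddCommGroup E] {f : ℝ → E} {M : ℝ}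

lemma integrable_of_norm_le_mul_exp_neg_mul_sq (ha : 0 < a) (hf : AEStronglyMeasurable f)
    (hbound : ∀ t, ‖f t‖ ≤ M * exp (-a * t ^ 2)) : Integrable f :=
  ((integrable_exp_neg_mul_sq ha).const_mul M).mono' hf (Filter.Eventually.of_forall hbound)

lemma norm_setIntegral_abs_ge_le_of_norm_le_mul_exp_neg_mul_sq [NormedSpace ℝ E]
    (ha : 0 < a) {δ : ℝ} (hδ : 0 < δ) (hbound : ∀ t, ‖f t‖ ≤ M * exp (-a * t ^ 2)) :
    ‖∫ t in {t : ℝ | δ ≤ |t|}, f t‖ ≤ M * exp (-a * δ ^ 2) / (a * δ) := by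
  have hM : 0 ≤ M := nonneg_of_mul_nonneg_left ((norm_nonneg _).trans (hbound 0)) (exp_pos _)
  calc ‖∫ t in {t : ℝ | δ ≤ |t|}, f t‖
      ≤ ∫ t in {t : ℝ | δ ≤ |t|}, M * exp (-a * t ^ 2) :=
        norm_integral_le_of_norm_le ((integrable_exp_neg_mul_sq ha).const_mul M).integrableOn
          (Filter.Eventually.of_forall hbound)
    _ ≤ M * (exp (-a * δ ^ 2) / (a * δ)) := by
        rw [integral_const_mul]
        exact mul_le_mul_of_nonneg_left (integral_abs_ge_exp_neg_mul_sq_le ha hδ) hM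
    _ = M * exp (-a * δ ^ 2) / (a * δ) := (mul_div_assoc ..).symm

end GaussianTail

section RotatedKernel

open Complex

lemma re_mul_cexp_neg_pi_div_four_mul_I (z : ℂ) :
    (z * cexp (-(π / 4) * I)).re = (z.re + z.im) / √2 := by
  have hcast : (-(π / 4) : ℂ) = ((-(π / 4) : ℝ) : ℂ) := by push_cast; ring
  rw [hcast, mul_re, exp_ofReal_mul_I_re, exp_ofReal_mul_I_im, Real.cos_neg, Real.sin_neg,
    cos_pi_div_four, sin_pi_div_four]
  field_simp
  rw [sq_sqrt zero_le_two]
  ring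

lemma half_norm_le_re_mul_cexp_neg_pi_div_four_mul_I {z : ℂ} (hre : 0 ≤ z.re)
    (him : 0 ≤ z.im) :
    ‖z‖ / 2 ≤ (z * cexp (-(π / 4) * I)).re := by
  have hsum : ‖z‖ ≤ z.re + z.im := by
    simpa [abs_of_nonneg hre, abs_of_nonneg him] using norm_le_abs_re_add_abs_im z
  have hsqrt : √2 ≤ 2 := by
    rw [sqrt_le_left zero_le_two]
    norm_num
  rw [re_mul_cexp_neg_pi_div_four_mul_I]
  calc ‖z‖ / 2 ≤ (z.re + z.im) / 2 := by gcongr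
    _ ≤ (z.re + z.im) / √2 := by gcongr

lemma norm_cexp_neg_mul_sq_mul_cexp_neg_pi_div_four_mul_I_le {k : ℝ} (hk : 0 ≤ k) {z : ℂ}
    (hre : 0 ≤ z.re) (him : 0 ≤ z.im) (t : ℝ) :
    ‖cexp (-k * t ^ 2 * z * cexp (-(π / 4) * I))‖ ≤
      Real.exp (-(k * (‖z‖ / 2)) * t ^ 2) := by
  have hre_eq : (-k * t ^ 2 * z * cexp (-(π / 4) * I)).re
      = -(k * t ^ 2) * (z * cexp (-(π / 4) * I)).re := by
    rw [← re_ofReal_mul]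
    congr 1
    push_cast
    ring
  rw [norm_exp, Real.exp_le_exp, hre_eq]
  calc -(k * t ^ 2) * (z * cexp (-(π / 4) * I)).re ≤ -(k * t ^ 2) * (‖z‖ / 2) :=
        mul_le_mul_of_nonpos_left (half_norm_le_re_mul_cexp_neg_pi_div_four_mul_I hre him)
          (neg_nonpos.mpr (by positivity))
    _ = -(k * (‖z‖ / 2)) * t ^ 2 := by ring

end RotatedKernel

theorem statement_12 (k c δ C₀ : ℝ) (hk : 0 < k) (hδ : 0 < δ)
    (b : ℝ → ℂ) (hb : Measurable b)
    (hbd : ∀ t : ℝ, ‖b t‖ ≤ C₀ * Real.exp (2 * c * k * (1 + t ^ 2))) :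
    ∀ z : ℂ, 0 ≤ z.re → 0 ≤ z.im → 4 * c < ‖z‖ →
      IntegrableOn (fun t : ℝ =>
        Complex.exp (-k * t ^ 2 * z * Complex.exp (-(π / 4) * Complex.I)) * b t)
        {t : ℝ | δ ≤ |t|} volume ∧
      ‖∫ t in {t : ℝ | δ ≤ |t|},
          Complex.exp (-k * t ^ 2 * z * Complex.exp (-(π / 4) * Complex.I)) * b t‖ ≤
        C₀ * Real.exp (2 * c * k) *
          Real.exp (-k * (‖z‖ / 2 - 2 * c) * δ ^ 2) /
            (k * (‖z‖ / 2 - 2 * c) * δ) := by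
  intro z hre him hz
  have ha : 0 < k * (‖z‖ / 2 - 2 * c) := mul_pos hk (by linarith)
  have hbound (t : ℝ) :
      ‖Complex.exp (-k * t ^ 2 * z * Complex.exp (-(π / 4) * Complex.I)) * b t‖ ≤
        C₀ * Real.exp (2 * c * k) * Real.exp (-(k * (‖z‖ / 2 - 2 * c)) * t ^ 2) :=
    calc _ ≤ Real.exp (-(k * (‖z‖ / 2)) * t ^ 2) *
          (C₀ * Real.exp (2 * c * k * (1 + t ^ 2))) := by
          rw [norm_mul]
          exact mul_le_mul (norm_cexp_neg_mul_sq_mul_cexp_neg_pi_div_four_mul_I_le hk.le hre him t)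
            (hbd t) (norm_nonneg _) (exp_pos _).le
      _ = C₀ * Real.exp (2 * c * k) * Real.exp (-(k * (‖z‖ / 2 - 2 * c)) * t ^ 2) := by
          rw [mul_left_comm, ← Real.exp_add, mul_assoc C₀, ← Real.exp_add]
          congr 2
          ring
  have hmeas : Measurable fun t : ℝ =>
      Complex.exp (-k * t ^ 2 * z * Complex.exp (-(π / 4) * Complex.I)) * b t := by fun_prop
  refine ⟨(integrable_of_norm_le_mul_exp_neg_mul_sq ha hmeas.aestronglyMeasurable
    hbound).integrableOn, ?_⟩
  convert norm_setIntegral_abs_ge_le_of_norm_le_mul_exp_neg_mul_sq ha hδ hbound using 3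
  rw [neg_mul]
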